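/- For even L ≥ 6, every element of the square Concentric Rectangular Array D_CRA is essential for the sum co-array: for every d ∈ D_CRA, the sumset (D_CRA \ {d}) + (D_CRA \ {d}) is a proper subset of {0,...,2L} × {0,...,2L}. -/

import Mathlib

open Pointwise

/-- `D₀(L) = {0, L} ∪ {odd n : 1 ≤ n ≤ L-1}`. -/
def D0 (L : ℤ) : Set ℤ := {0, L} ∪ {n : ℤ | Odd n ∧ 1 ≤ n ∧ n ≤ L - 1}

/-- `D₁(L) = {0, 1, L-1, L}`. -/
def D1 (L : ℤ) : Set ℤ := {0, 1, L - 1, L}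

/-- `D₂(L) = {even n : 2 ≤ n ≤ L-2}`. -/
def D2 (L : ℤ) : Set ℤ := {n : ℤ | Even n ∧ 2 ≤ n ∧ n ≤ L - 2}

/-- The square Concentric Rectangular Array (CRA) with `L_x = L_y = L`:
the union over `i ∈ {0,1,2}` of `D_i(L) × {i, L-i}` and `{i, L-i} × D_i(L)`. -/
def CRA (L : ℤ) : Set (ℤ × ℤ) :=
  {p : ℤ × ℤ | (p.1 ∈ D0 L ∧ (p.2 = 0 ∨ p.2 = L)) ∨ ((p.1 = 0 ∨ p.1 = L) ∧ p.2 ∈ D0 L) ∨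
    (p.1 ∈ D1 L ∧ (p.2 = 1 ∨ p.2 = L - 1)) ∨ ((p.1 = 1 ∨ p.1 = L - 1) ∧ p.2 ∈ D1 L) ∨
    (p.1 ∈ D2 L ∧ (p.2 = 2 ∨ p.2 = L - 2)) ∨ ((p.1 = 2 ∨ p.1 = L - 2) ∧ p.2 ∈ D2 L)}

/-!
The CRA lies in `[0, L]²` and is invariant under the swap of coordinates and, for even `L`,
under the reflections `x ↦ L - x` and `y ↦ L - y`. These symmetries act affinely, so they carry
a sum that can only be formed using `d` to a sum that can only be formed using the image of `d`.
Up to symmetry, `d` is `(x, 0)` with `x ∈ D₀(L)`, `x < L`, or `(1, 1)`, or `(2, 2)`, or `(x, 2)`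
with `x ∈ D₂(L)`, `x ≥ 4`, and then `(x, 0)`, `(2, 1)`, `(2, 3)`, `(x, 2)` respectively is such a
sum: for `L ≥ 6` the rows `y = 0, 1, 2, 3` of the CRA are `D₀(L)`, `D₁(L)`, `D₂(L)` and `{0, L}`,
and a short parity and size count shows every other way of splitting these points fails.
-/

def IsEssentialWitness {α : Type*} [Add α] (S : Set α) (d w : α) : Prop :=
  w ∈ S + S ∧ ∀ a ∈ S, ∀ b ∈ S, a + b = w → a = d ∨ b = d

namespace IsEssentialWitness

variable {α : Type*} [Add α] {S T : Set α} {d w : α}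

theorem not_mem_add_sdiff (h : IsEssentialWitness S d w) : w ∉ (S \ {d}) + (S \ {d}) := by
  rintro ⟨a, ⟨ha, had⟩, b, ⟨hb, hbd⟩, hab⟩
  rcases h.2 a ha b hb hab with rfl | rfl
  exacts [had rfl, hbd rfl]

theorem add_sdiff_ssubset (h : IsEssentialWitness S d w) (hT : S + S ⊆ T) :
    (S \ {d}) + (S \ {d}) ⊂ T :=
  (Set.ssubset_iff_of_subset ((Set.add_subset_add Set.sdiff_subset Set.sdiff_subset).trans hT)).2
    ⟨w, hT h.1, h.not_mem_add_sdiff⟩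

theorem comap {φ ψ : α → α} (h : IsEssentialWitness S (φ d) w) (hφ : Function.Involutive φ)
    (hS : ∀ a ∈ S, φ a ∈ S) (hψ : Function.Injective ψ) (hadd : ∀ a b, φ a + φ b = ψ (a + b)) :
    IsEssentialWitness S d (ψ w) := by
  refine ⟨?_, fun a ha b hb hab => ?_⟩
  · obtain ⟨a, ha, b, hb, rfl⟩ := h.1
    exact ⟨φ a, hS a ha, φ b, hS b hb, hadd a b⟩
  · have hsum : φ a + φ b = w := hψ (by rw [← hadd, hφ a, hφ b, hab])
    simpa only [hφ.injective.eq_iff] using h.2 (φ a) (hS a ha) (φ b) (hS b hb) hsum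

end IsEssentialWitness

theorem mem_D0_iff {L n : ℤ} : n ∈ D0 L ↔ n = 0 ∨ n = L ∨ n % 2 = 1 ∧ 1 ≤ n ∧ n ≤ L - 1 := by
  simp [D0, Int.odd_iff, or_assoc]

theorem mem_D1_iff {L n : ℤ} : n ∈ D1 L ↔ n = 0 ∨ n = 1 ∨ n = L - 1 ∨ n = L := Iff.rfl

theorem mem_D2_iff {L n : ℤ} : n ∈ D2 L ↔ n % 2 = 0 ∧ 2 ≤ n ∧ n ≤ L - 2 := by
  simp [D2, Int.even_iff]

section CRA

variable {L x : ℤ}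

theorem mem_CRA_bounds (hL : 1 ≤ L) {p : ℤ × ℤ} (hp : p ∈ CRA L) :
    0 ≤ p.1 ∧ p.1 ≤ L ∧ 0 ≤ p.2 ∧ p.2 ≤ L := by
  simp only [CRA, Set.mem_ofPred_eq, mem_D0_iff, mem_D1_iff, mem_D2_iff] at hp
  omega

theorem CRA_add_CRA_subset (hL : 1 ≤ L) :
    CRA L + CRA L ⊆ {p : ℤ × ℤ | 0 ≤ p.1 ∧ p.1 ≤ 2 * L ∧ 0 ≤ p.2 ∧ p.2 ≤ 2 * L} := by
  rintro _ ⟨a, ha, b, hb, rfl⟩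
  have := mem_CRA_bounds hL ha
  have := mem_CRA_bounds hL hb
  simp only [Set.mem_ofPred_eq, Prod.fst_add, Prod.snd_add]
  omega

theorem swap_mem_CRA {p : ℤ × ℤ} (hp : p ∈ CRA L) : p.swap ∈ CRA L := by
  simp only [CRA, Set.mem_ofPred_eq, Prod.fst_swap, Prod.snd_swap] at hp ⊢
  tauto

theorem reflect_fst_mem_CRA (hE : Even L) {p : ℤ × ℤ} (hp : p ∈ CRA L) :
    (L - p.1, p.2) ∈ CRA L := by
  rw [Int.even_iff] at hE
  simp only [CRA, Set.mem_ofPred_eq, mem_D0_iff, mem_D1_iff, mem_D2_iff] at hp ⊢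
  rcases hp with ⟨hx, hy⟩ | ⟨hx, hy⟩ | ⟨hx, hy⟩ | ⟨hx, hy⟩ | ⟨hx, hy⟩ | ⟨hx, hy⟩
  · exact Or.inl ⟨by omega, hy⟩
  · exact Or.inr <| Or.inl ⟨by omega, hy⟩
  · exact Or.inr <| Or.inr <| Or.inl ⟨by omega, hy⟩
  · exact Or.inr <| Or.inr <| Or.inr <| Or.inl ⟨by omega, hy⟩
  · exact Or.inr <| Or.inr <| Or.inr <| Or.inr <| Or.inl ⟨by omega, hy⟩
  · exact Or.inr <| Or.inr <| Or.inr <| Or.inr <| Or.inr ⟨by omega, hy⟩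

theorem reflect_snd_mem_CRA (hE : Even L) {p : ℤ × ℤ} (hp : p ∈ CRA L) :
    (p.1, L - p.2) ∈ CRA L :=
  swap_mem_CRA (reflect_fst_mem_CRA hE (swap_mem_CRA hp))

variable (hL : 6 ≤ L)
include hL

theorem mk_zero_mem_CRA_iff (hE : Even L) : (x, 0) ∈ CRA L ↔ x ∈ D0 L := by
  rw [Int.even_iff] at hE
  simp only [CRA, Set.mem_ofPred_eq, mem_D0_iff, mem_D1_iff, mem_D2_iff, true_or, and_true]
  constructor <;> intro h <;> omega

theorem mk_one_mem_CRA_iff : (x, 1) ∈ CRA L ↔ x ∈ D1 L := by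
  simp only [CRA, Set.mem_ofPred_eq, mem_D0_iff, mem_D1_iff, mem_D2_iff, true_or, and_true]
  constructor <;> intro h <;> omega

theorem mk_two_mem_CRA_iff (hE : Even L) : (x, 2) ∈ CRA L ↔ x ∈ D2 L := by
  rw [Int.even_iff] at hE
  simp only [CRA, Set.mem_ofPred_eq, mem_D0_iff, mem_D1_iff, mem_D2_iff, true_or, and_true]
  constructor <;> intro h <;> omega

theorem mk_three_mem_CRA_iff : (x, 3) ∈ CRA L ↔ x = 0 ∨ x = L := by
  simp only [CRA, Set.mem_ofPred_eq, mem_D0_iff, mem_D1_iff, mem_D2_iff]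
  constructor <;> intro h <;> omega

theorem isEssentialWitness_CRA_mk_zero (hE : Even L) (hx : x ∈ D0 L) (hxL : x < L) :
    IsEssentialWitness (CRA L) (x, 0) (x, 0) := by
  have h0 : ((0 : ℤ), (0 : ℤ)) ∈ CRA L := (mk_zero_mem_CRA_iff hL hE).2 (by simp [D0])
  refine ⟨⟨(x, 0), (mk_zero_mem_CRA_iff hL hE).2 hx, (0, 0), h0, by simp⟩, ?_⟩
  rintro ⟨a₁, a₂⟩ ha ⟨b₁, b₂⟩ hb hab
  simp only [Prod.mk_add_mk, Prod.mk.injEq] at hab ⊢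
  have := mem_CRA_bounds (by omega) ha
  have := mem_CRA_bounds (by omega) hb
  obtain ⟨rfl, rfl⟩ : a₂ = 0 ∧ b₂ = 0 := by simp only at *; omega
  rw [mk_zero_mem_CRA_iff hL hE, mem_D0_iff] at ha hb
  rw [mem_D0_iff] at hx
  omega

theorem isEssentialWitness_CRA_one_one (hE : Even L) :
    IsEssentialWitness (CRA L) (1, 1) (2, 1) := by
  refine ⟨⟨(1, 1), (mk_one_mem_CRA_iff hL).2 (by simp [D1]), (1, 0), ?_, by simp⟩, ?_⟩
  · exact (mk_zero_mem_CRA_iff hL hE).2 (by rw [mem_D0_iff]; omega)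
  rintro ⟨a₁, a₂⟩ ha ⟨b₁, b₂⟩ hb hab
  simp only [Prod.mk_add_mk, Prod.mk.injEq] at hab ⊢
  have := mem_CRA_bounds (by omega) ha
  have := mem_CRA_bounds (by omega) hb
  simp only at *
  rcases (by omega : a₂ = 0 ∧ b₂ = 1 ∨ a₂ = 1 ∧ b₂ = 0) with ⟨rfl, rfl⟩ | ⟨rfl, rfl⟩ <;>
    simp only [mk_zero_mem_CRA_iff hL hE, mk_one_mem_CRA_iff hL, mem_D0_iff, mem_D1_iff]
      at ha hb <;> omega

theorem isEssentialWitness_CRA_two_two (hE : Even L) :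
    IsEssentialWitness (CRA L) (2, 2) (2, 3) := by
  have h01 : ((0 : ℤ), (1 : ℤ)) ∈ CRA L := (mk_one_mem_CRA_iff hL).2 (by simp [D1])
  refine ⟨⟨(2, 2), (mk_two_mem_CRA_iff hL hE).2 ?_, (0, 1), h01, by simp⟩, ?_⟩
  · rw [mem_D2_iff]; omega
  rintro ⟨a₁, a₂⟩ ha ⟨b₁, b₂⟩ hb hab
  simp only [Prod.mk_add_mk, Prod.mk.injEq] at hab ⊢
  have := mem_CRA_bounds (by omega) ha
  have := mem_CRA_bounds (by omega) hb
  simp only at *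
  rcases (by omega : a₂ = 0 ∧ b₂ = 3 ∨ a₂ = 1 ∧ b₂ = 2 ∨ a₂ = 2 ∧ b₂ = 1 ∨ a₂ = 3 ∧ b₂ = 0) with
    ⟨rfl, rfl⟩ | ⟨rfl, rfl⟩ | ⟨rfl, rfl⟩ | ⟨rfl, rfl⟩ <;>
    simp only [mk_zero_mem_CRA_iff hL hE, mk_one_mem_CRA_iff hL, mk_two_mem_CRA_iff hL hE,
      mk_three_mem_CRA_iff hL, mem_D0_iff, mem_D1_iff, mem_D2_iff] at ha hb <;> omega

theorem isEssentialWitness_CRA_mk_two (hE : Even L) (hx : x ∈ D2 L) (hx4 : 4 ≤ x) :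
    IsEssentialWitness (CRA L) (x, 2) (x, 2) := by
  have h0 : ((0 : ℤ), (0 : ℤ)) ∈ CRA L := (mk_zero_mem_CRA_iff hL hE).2 (by simp [D0])
  refine ⟨⟨(x, 2), (mk_two_mem_CRA_iff hL hE).2 hx, (0, 0), h0, by simp⟩, ?_⟩
  rw [mem_D2_iff] at hx
  rintro ⟨a₁, a₂⟩ ha ⟨b₁, b₂⟩ hb hab
  simp only [Prod.mk_add_mk, Prod.mk.injEq] at hab ⊢
  have := mem_CRA_bounds (by omega) ha
  have := mem_CRA_bounds (by omega) hb
  simp only at *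
  rcases (by omega : a₂ = 0 ∧ b₂ = 2 ∨ a₂ = 1 ∧ b₂ = 1 ∨ a₂ = 2 ∧ b₂ = 0) with
    ⟨rfl, rfl⟩ | ⟨rfl, rfl⟩ | ⟨rfl, rfl⟩ <;>
    simp only [mk_zero_mem_CRA_iff hL hE, mk_one_mem_CRA_iff hL, mk_two_mem_CRA_iff hL hE,
      mem_D0_iff, mem_D1_iff, mem_D2_iff] at ha hb <;> omega

theorem exists_isEssentialWitness_CRA_of_le (hE : Even L) {d : ℤ × ℤ} (hd : d ∈ CRA L)
    (hyx : d.2 ≤ d.1) (hx : 2 * d.1 ≤ L) : ∃ w, IsEssentialWitness (CRA L) d w := by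
  obtain ⟨x, y⟩ := d
  simp only at hyx hx
  have hy : y = 0 ∨ y = 1 ∨ y = 2 := by
    simp only [CRA, Set.mem_ofPred_eq, mem_D0_iff, mem_D1_iff, mem_D2_iff] at hd
    omega
  rcases hy with rfl | rfl | rfl
  · rw [mk_zero_mem_CRA_iff hL hE] at hd
    exact ⟨_, isEssentialWitness_CRA_mk_zero hL hE hd (by omega)⟩
  · rw [mk_one_mem_CRA_iff hL, mem_D1_iff] at hd
    obtain rfl : x = 1 := by omega
    exact ⟨_, isEssentialWitness_CRA_one_one hL hE⟩
  · rw [mk_two_mem_CRA_iff hL hE] at hd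
    rcases eq_or_ne x 2 with rfl | hx2
    · exact ⟨_, isEssentialWitness_CRA_two_two hL hE⟩
    · exact ⟨_, isEssentialWitness_CRA_mk_two hL hE hd (by rw [mem_D2_iff] at hd; omega)⟩

theorem exists_isEssentialWitness_CRA (hE : Even L) {d : ℤ × ℤ} (hd : d ∈ CRA L) :
    ∃ w, IsEssentialWitness (CRA L) d w := by
  wlog hx : 2 * d.1 ≤ L generalizing d
  · obtain ⟨w, hw⟩ := this (reflect_fst_mem_CRA hE hd) (by simp only; omega)
    exact ⟨_, hw.comap (φ := fun p => (L - p.1, p.2)) (ψ := fun p => (2 * L - p.1, p.2))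
      (fun _ => by simp) (fun _ => reflect_fst_mem_CRA hE)
      (fun p q h => by simp only [Prod.mk.injEq] at h; ext <;> omega)
      (fun a b => Prod.ext (by simp only [Prod.fst_add]; ring) rfl)⟩
  wlog hy : 2 * d.2 ≤ L generalizing d
  · obtain ⟨w, hw⟩ := this (reflect_snd_mem_CRA hE hd) hx (by simp only; omega)
    exact ⟨_, hw.comap (φ := fun p => (p.1, L - p.2)) (ψ := fun p => (p.1, 2 * L - p.2))
      (fun _ => by simp) (fun _ => reflect_snd_mem_CRA hE)
      (fun p q h => by simp only [Prod.mk.injEq] at h; ext <;> omega)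
      (fun a b => Prod.ext rfl (by simp only [Prod.snd_add]; ring))⟩
  wlog hyx : d.2 ≤ d.1 generalizing d
  · obtain ⟨w, hw⟩ := this (swap_mem_CRA hd) hy hx
      (by simp only [Prod.fst_swap, Prod.snd_swap]; omega)
    exact ⟨_, hw.comap Prod.swap_swap (fun _ => swap_mem_CRA) Prod.swap_injective
      (fun a b => (Prod.swap_add a b).symm)⟩
  exact exists_isEssentialWitness_CRA_of_le hL hE hd hyx hx

end CRA

/-- Every element of the CRA is essential for the sum co-array. -/
theorem stmt_16 (L : ℤ) (hL : 6 ≤ L) (hE : Even L) :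
    ∀ d ∈ CRA L,
      (CRA L \ {d}) + (CRA L \ {d}) ⊂
        {p : ℤ × ℤ | 0 ≤ p.1 ∧ p.1 ≤ 2 * L ∧ 0 ≤ p.2 ∧ p.2 ≤ 2 * L} := by
  intro d hd
  obtain ⟨w, hw⟩ := exists_isEssentialWitness_CRA hL hE hd
  exact hw.add_sdiff_ssubset (CRA_add_CRA_subset (by omega))
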